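/- Let m > 1 be an integer and α ∈ (0,1). Suppose F is continuously differentiable on [0,1], with ρ = F^{(1)} satisfying ρ(y) > 0 for y ∈ (0,1). Let x ∈ (0,1). Assume m/n ≤ ρ(x)/l_α² and |B_{m,1}(ρ;x) − ρ(x)| ≤ min( ρ(x)/l_α², l_α·√(m·ρ(x)/n) ). Then P( |B_m^{(1)}(Y_n;x) − ρ(x)| ≥ (2l_α + 1/l_α)·√(m·ρ(x)/n) ) ≤ α. -/

import Mathlib

open Set Finset MeasureTheory ProbabilityTheory

/-- Bernstein basis polynomial `p_{m,k}(x) = C(m,k) x^k (1-x)^{m-k}`. -/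
noncomputable def bern (m k : ℕ) (x : ℝ) : ℝ :=
  (m.choose k : ℝ) * x ^ k * (1 - x) ^ (m - k)

/-- Empirical distribution function `Y_n(x) = (1/n) Σ_r 1{X_r ≤ x}`. -/
noncomputable def empY {Ω : Type*} (n : ℕ) (X : Fin n → Ω → ℝ) (x : ℝ) (ω : Ω) : ℝ :=
  (1 / n : ℝ) * ∑ r, (if X r ω ≤ x then (1 : ℝ) else 0)

/-- Random Bernstein polynomial `B_m(Y_n;x)`, as a function of `x` for each `ω`. -/
noncomputable def BY {Ω : Type*} (m n : ℕ) (X : Fin n → Ω → ℝ) (ω : Ω) (x : ℝ) : ℝ :=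
  ∑ k ∈ Finset.range (m + 1), empY n X ((k : ℝ) / m) ω * bern m k x

/-- Bernstein–Kantorovich operator with `k = 1`:
`B_{m,1}(f;x) = Σ_{l=0}^{m-1} p_{m-1,l}(x) ∫₀¹ f((l+t)/m) dt`. -/
noncomputable def BK1 (m : ℕ) (f : ℝ → ℝ) (x : ℝ) : ℝ :=
  ∑ l ∈ Finset.range (m - 1 + 1), bern (m - 1) l x *
    ∫ t in (0:ℝ)..1, f (((l : ℝ) + t) / m)

/-- `l_α = √(3 log(2 e^{1/3} / α))`. -/
noncomputable def lAlpha (α : ℝ) : ℝ :=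
  Real.sqrt (3 * Real.log (2 * Real.exp (1 / 3) / α))

/-! The derivative of `B_m(Y_n; ·)` at `x` is `(m / n) ∑_r g(X_r)` with
`g(u) = ∑_l p_{m-1,l}(x) 1{l/m < u ≤ (l+1)/m}`: a sum of `n` independent `[0, 1]`-valued
variables, each of mean `B_{m,1}(ρ; x) / m` (fundamental theorem of calculus on each cell).
Since `Z² ≤ Z` for such variables, `exp t ≤ 1 + t + 3t²/4` on `[-1, 1]` yields a Chernoff bound
whose exponent scales with the mean rather than with `n`. With `s = √(n ρ(x) / m)`, the choice
`t = 2l / (3s)` at deviation `(l + 1/l) s` gives the exponent `-(l² + 1) / 3 ≤ log (α / 2)`, and the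
bias `|B_{m,1}(ρ; x) - ρ(x)| ≤ l √(m ρ(x) / n)` is absorbed by the triangle inequality. -/

theorem Real.exp_le_one_add_add_mul_sq_of_abs_le_one {x : ℝ} (hx : |x| ≤ 1) :
    Real.exp x ≤ 1 + x + 3 / 4 * x ^ 2 := by
  have h := Real.exp_bound hx (n := 3) (by norm_num)
  simp only [Finset.sum_range_succ, Finset.sum_range_zero, Nat.factorial] at h
  have hcube : |x| ^ 3 ≤ x ^ 2 := by
    rw [pow_succ, sq_abs]
    exact mul_le_of_le_one_right (sq_nonneg _) hx
  norm_num at h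
  nlinarith [(abs_le.mp h).2]

section Concentration

variable {Ω : Type*} [MeasurableSpace Ω] {μ : Measure Ω} [IsProbabilityMeasure μ]

open Real

theorem mgf_le_exp_of_mem_Icc {Z : Ω → ℝ} (hZ : Measurable Z) (h01 : ∀ ω, Z ω ∈ Set.Icc 0 1)
    {t : ℝ} (ht : |t| ≤ 1) : mgf Z μ t ≤ exp ((t + 3 / 4 * t ^ 2) * μ[Z]) := by
  have hZint : Integrable Z μ := .of_mem_Icc 0 1 hZ.aemeasurable (.of_forall h01)
  -- `Z ^ 2 ≤ Z` on `[0, 1]` turns the quadratic bound into a linear one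
  have hpt : ∀ ω, exp (t * Z ω) ≤ 1 + (t + 3 / 4 * t ^ 2) * Z ω := by
    intro ω
    obtain ⟨h0, h1⟩ := h01 ω
    have htZ : |t * Z ω| ≤ 1 := by
      rw [abs_mul, abs_of_nonneg h0]; exact mul_le_one₀ ht h0 h1
    have := exp_le_one_add_add_mul_sq_of_abs_le_one htZ
    nlinarith [sq_nonneg t, mul_le_of_le_one_right h0 h1]
  calc mgf Z μ t ≤ ∫ ω, (1 + (t + 3 / 4 * t ^ 2) * Z ω) ∂μ :=
        integral_mono (integrable_exp_mul_of_mem_Icc hZ.aemeasurable (.of_forall h01))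
          ((integrable_const 1).add (hZint.const_mul _)) hpt
    _ = 1 + (t + 3 / 4 * t ^ 2) * μ[Z] := by
        rw [integral_add (integrable_const 1) (hZint.const_mul _), integral_const_mul]
        simp
    _ ≤ exp ((t + 3 / 4 * t ^ 2) * μ[Z]) := by
        linarith [add_one_le_exp ((t + 3 / 4 * t ^ 2) * μ[Z])]

variable {ι : Type*} [Fintype ι] {Z : ι → Ω → ℝ}

theorem mgf_sum_le_exp_of_mem_Icc (hind : iIndepFun Z μ) (hmeas : ∀ i, Measurable (Z i))
    (h01 : ∀ i ω, Z i ω ∈ Set.Icc 0 1) {t : ℝ} (ht : |t| ≤ 1) :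
    mgf (∑ i, Z i) μ t ≤ exp ((t + 3 / 4 * t ^ 2) * ∑ i, μ[Z i]) := by
  rw [hind.mgf_sum hmeas, Finset.mul_sum, exp_sum]
  exact Finset.prod_le_prod (fun _ _ => mgf_nonneg)
    fun i _ => mgf_le_exp_of_mem_Icc (hmeas i) (h01 i) ht

theorem measureReal_le_abs_sum_sub_le (hind : iIndepFun Z μ) (hmeas : ∀ i, Measurable (Z i))
    (h01 : ∀ i ω, Z i ω ∈ Set.Icc 0 1) {t u : ℝ} (ht0 : 0 ≤ t) (ht1 : t ≤ 1) :
    μ.real {ω | u ≤ |∑ i, Z i ω - ∑ i, μ[Z i]|} ≤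
      2 * exp (-t * u + 3 / 4 * t ^ 2 * ∑ i, μ[Z i]) := by
  set S := ∑ i, Z i
  set ν := ∑ i, μ[Z i]
  have hS : ∀ ω, S ω = ∑ i, Z i ω := fun ω => Finset.sum_apply ω _ _
  have hSmeas : Measurable S := by fun_prop
  have hSint : ∀ s, Integrable (fun ω => exp (s * S ω)) μ := fun s =>
    integrable_exp_mul_of_mem_Icc hSmeas.aemeasurable (a := 0) (b := Fintype.card ι) (.of_forall
      fun ω => by
        rw [hS]
        exact ⟨Finset.sum_nonneg fun i _ => (h01 i ω).1,
          by simpa using Finset.sum_le_sum fun i (_ : i ∈ Finset.univ) => (h01 i ω).2⟩)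
  have hupper : μ.real {ω | ν + u ≤ S ω} ≤ exp (-t * u + 3 / 4 * t ^ 2 * ν) := by
    calc _ ≤ exp (-t * (ν + u)) * mgf S μ t := measure_ge_le_exp_mul_mgf _ ht0 (hSint t)
      _ ≤ exp (-t * (ν + u)) * exp ((t + 3 / 4 * t ^ 2) * ν) := by
          gcongr
          exact mgf_sum_le_exp_of_mem_Icc hind hmeas h01 (by rw [abs_of_nonneg ht0]; exact ht1)
      _ = _ := by rw [← exp_add]; ring_nf
  have hlower : μ.real {ω | S ω ≤ ν - u} ≤ exp (-t * u + 3 / 4 * t ^ 2 * ν) := by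
    calc _ ≤ exp (-(-t) * (ν - u)) * mgf S μ (-t) :=
          measure_le_le_exp_mul_mgf _ (by linarith) (hSint (-t))
      _ ≤ exp (-(-t) * (ν - u)) * exp ((-t + 3 / 4 * (-t) ^ 2) * ν) := by
          gcongr
          exact mgf_sum_le_exp_of_mem_Icc hind hmeas h01
            (by rw [abs_neg, abs_of_nonneg ht0]; exact ht1)
      _ = _ := by rw [← exp_add]; ring_nf
  have hsub : {ω | u ≤ |∑ i, Z i ω - ν|} ⊆ {ω | ν + u ≤ S ω} ∪ {ω | S ω ≤ ν - u} := by
    intro ω hω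
    simp only [Set.mem_union, Set.mem_ofPred_eq, hS] at hω ⊢
    rcases le_abs'.mp hω with h | h
    · right; linarith
    · left; linarith
  calc _ ≤ μ.real ({ω | ν + u ≤ S ω} ∪ {ω | S ω ≤ ν - u}) := measureReal_mono hsub
    _ ≤ μ.real {ω | ν + u ≤ S ω} + μ.real {ω | S ω ≤ ν - u} := measureReal_union_le _ _
    _ ≤ _ := by linarith

end Concentration

theorem bern_eq_eval (m k : ℕ) (x : ℝ) : bern m k x = (bernsteinPolynomial ℝ m k).eval x := by
  simp [bern, bernsteinPolynomial]

theorem bern_nonneg {m k : ℕ} {x : ℝ} (hx : x ∈ Set.Icc 0 1) : 0 ≤ bern m k x := by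
  obtain ⟨h0, h1⟩ := hx
  have : 0 ≤ 1 - x := by linarith
  unfold bern; positivity

theorem sum_range_bern (m : ℕ) (x : ℝ) : ∑ k ∈ range (m + 1), bern m k x = 1 := by
  simp [bern_eq_eval, ← Polynomial.eval_finsetSum, bernsteinPolynomial.sum]

theorem derivative_sum_smul_bernsteinPolynomial {R : Type*} [CommRing R] (m : ℕ) (c : ℕ → R) :
    Polynomial.derivative (∑ k ∈ range (m + 1), c k • bernsteinPolynomial R m k) =
      m * ∑ l ∈ range m, (c (l + 1) - c l) • bernsteinPolynomial R (m - 1) l := by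
  cases m with
  | zero => simp [bernsteinPolynomial]
  | succ m =>
    have hlast : bernsteinPolynomial R m (m + 1) = 0 :=
      bernsteinPolynomial.eq_zero_of_lt R (by omega)
    simp only [Polynomial.derivative_sum, Polynomial.derivative_smul]
    rw [Finset.sum_range_succ', bernsteinPolynomial.derivative_zero]
    simp only [bernsteinPolynomial.derivative_succ, Nat.add_sub_cancel, sub_smul,
      Finset.sum_sub_distrib, Finset.mul_sum, smul_sub, mul_sub]
    rw [Finset.sum_range_succ (fun l => c (l + 1) • (_ * bernsteinPolynomial R m (l + 1))), hlast,
      Finset.sum_range_succ' (fun l => _ * c l • bernsteinPolynomial R m l)]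
    simp only [mul_smul_comm, mul_zero, smul_zero, add_zero, neg_mul, smul_neg]
    abel

theorem deriv_sum_mul_bern (m : ℕ) (c : ℕ → ℝ) (x : ℝ) :
    deriv (fun y => ∑ k ∈ range (m + 1), c k * bern m k y) x =
      m * ∑ l ∈ range m, (c (l + 1) - c l) * bern (m - 1) l x := by
  have hpoly : (fun y => ∑ k ∈ range (m + 1), c k * bern m k y) =
      fun y => (∑ k ∈ range (m + 1), c k • bernsteinPolynomial ℝ m k).eval y := by
    funext y
    simp [bern_eq_eval, Polynomial.eval_finsetSum]
  rw [hpoly, Polynomial.deriv, derivative_sum_smul_bernsteinPolynomial]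
  simp [bern_eq_eval, Polynomial.eval_finsetSum]

theorem Set.indicator_Ioc_one_eq_sub {a b : ℝ} (hab : a ≤ b) (u : ℝ) :
    (Set.Ioc a b).indicator 1 u = (if u ≤ b then (1 : ℝ) else 0) - (if u ≤ a then 1 else 0) := by
  by_cases hua : u ≤ a
  · simp [hua, hua.trans hab]
  · by_cases hub : u ≤ b <;> simp [Set.indicator_apply, hua, hub]

theorem MeasureTheory.integral_indicator_Ioc_one_comp {Ω : Type*} [MeasurableSpace Ω]
    {P : Measure Ω} [IsFiniteMeasure P] {X : Ω → ℝ} (hX : Measurable X) {a b : ℝ} (hab : a ≤ b) :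
    ∫ ω, (Set.Ioc a b).indicator 1 (X ω) ∂P = P.real {ω | X ω ≤ b} - P.real {ω | X ω ≤ a} := by
  have hpre : X ⁻¹' Set.Ioc a b = {ω | X ω ≤ b} \ {ω | X ω ≤ a} := by
    ext ω; simp [and_comm]
  have hind : (fun ω => (Set.Ioc a b).indicator (1 : ℝ → ℝ) (X ω)) =
      (X ⁻¹' Set.Ioc a b).indicator 1 := funext fun ω => (Set.indicator_comp_right X).symm
  rw [hind, integral_indicator_one (hX measurableSet_Ioc), hpre]
  exact measureReal_sdiff (fun ω h => le_trans h hab) (hX measurableSet_Iic)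

noncomputable def bernDerivKernel (m : ℕ) (x u : ℝ) : ℝ :=
  ∑ l ∈ range m, bern (m - 1) l x * (Set.Ioc ((l : ℝ) / m) ((l + 1) / m)).indicator 1 u

theorem measurable_bernDerivKernel (m : ℕ) (x : ℝ) : Measurable (bernDerivKernel m x) :=
  Finset.measurable_sum _ fun _ _ => (measurable_const.indicator measurableSet_Ioc).const_mul _

theorem bernDerivKernel_mem_Icc (m : ℕ) {x : ℝ} (hx : x ∈ Set.Icc 0 1) (u : ℝ) :
    bernDerivKernel m x u ∈ Set.Icc 0 1 := by
  have hterm : ∀ l, bern (m - 1) l x * (Set.Ioc ((l : ℝ) / m) ((l + 1) / m)).indicator 1 u ∈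
      Set.Icc 0 (bern (m - 1) l x) := fun l =>
    ⟨mul_nonneg (bern_nonneg hx) (Set.indicator_nonneg (fun _ _ => zero_le_one) _),
      mul_le_of_le_one_right (bern_nonneg hx) (Set.indicator_le_self' (fun _ _ => zero_le_one) _)⟩
  refine ⟨Finset.sum_nonneg fun l _ => (hterm l).1, ?_⟩
  calc bernDerivKernel m x u ≤ ∑ l ∈ range m, bern (m - 1) l x :=
        Finset.sum_le_sum fun l _ => (hterm l).2
    _ ≤ 1 := by
        rcases Nat.eq_zero_or_pos m with rfl | hm
        · simp
        · rw [← sum_range_bern (m - 1) x, Nat.sub_add_cancel hm]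

theorem deriv_BY {Ω : Type*} (m n : ℕ) (X : Fin n → Ω → ℝ) (ω : Ω) (x : ℝ) :
    deriv (fun y => BY m n X ω y) x = m / n * ∑ r, bernDerivKernel m x (X r ω) := by
  have hstep : ∀ l : ℕ, empY n X ((l + 1 : ℕ) / m) ω - empY n X (l / m) ω =
      1 / n * ∑ r, (Set.Ioc ((l : ℝ) / m) ((l + 1) / m)).indicator 1 (X r ω) := by
    intro l
    have hle : (l : ℝ) / m ≤ (l + 1) / m := by gcongr; linarith
    push_cast
    simp only [empY, ← mul_sub, ← Finset.sum_sub_distrib, Set.indicator_Ioc_one_eq_sub hle]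
  simp only [BY, deriv_sum_mul_bern, hstep, bernDerivKernel, Finset.mul_sum, Finset.sum_mul]
  rw [Finset.sum_comm]
  exact Finset.sum_congr rfl fun r _ => Finset.sum_congr rfl fun l _ => by ring

theorem integral_bernDerivKernel_comp {Ω : Type*} [MeasurableSpace Ω] {P : Measure Ω}
    [IsProbabilityMeasure P] {X : Ω → ℝ} (hX : Measurable X) {F : ℝ → ℝ}
    (hcdf : ∀ y, P.real {ω | X ω ≤ y} = F y) (m : ℕ) (x : ℝ) :
    ∫ ω, bernDerivKernel m x (X ω) ∂P =
      ∑ l ∈ range m, bern (m - 1) l x * (F ((l + 1) / m) - F (l / m)) := by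
  have hint : ∀ l : ℕ, Integrable
      (fun ω => bern (m - 1) l x * (Set.Ioc ((l : ℝ) / m) ((l + 1) / m)).indicator 1 (X ω)) P :=
    fun l => (Integrable.of_mem_Icc 0 1
      ((measurable_const.indicator measurableSet_Ioc).comp hX).aemeasurable
      (.of_forall fun ω => ⟨Set.indicator_nonneg (fun _ _ => zero_le_one) _,
        Set.indicator_le_self' (fun _ _ => zero_le_one) _⟩)).const_mul _
  simp only [bernDerivKernel]
  rw [integral_finsetSum _ fun l _ => hint l]
  refine Finset.sum_congr rfl fun l _ => ?_
  rw [integral_const_mul, integral_indicator_Ioc_one_comp hX (by gcongr; linarith), hcdf, hcdf]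

theorem integral_derivWithin_Icc_of_le {F : ℝ → ℝ} {c d a b : ℝ}
    (hF : ContDiffOn ℝ 1 F (Set.Icc c d)) (hab : a ≤ b) (hca : c ≤ a) (hbd : b ≤ d) :
    ∫ y in a..b, derivWithin F (Set.Icc c d) y = F b - F a := by
  rcases hab.eq_or_lt with rfl | hlt
  · simp
  have hcd : c < d := by linarith
  refine intervalIntegral.integral_eq_sub_of_hasDeriv_right_of_le hab
    (hF.continuousOn.mono (Set.Icc_subset_Icc hca hbd)) (fun y hy => ?_) ?_
  · have hy' : y ∈ Set.Ioo c d := ⟨hca.trans_lt hy.1, hy.2.trans_le hbd⟩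
    have hdiff := (hF.differentiableOn one_ne_zero) y (Set.Ioo_subset_Icc_self hy')
    exact (hdiff.hasDerivWithinAt.hasDerivAt (Icc_mem_nhds hy'.1 hy'.2)).hasDerivWithinAt
  · exact ((hF.continuousOn_derivWithin (uniqueDiffOn_Icc hcd) le_rfl).mono
      (Set.Icc_subset_Icc hca hbd)).intervalIntegrable_of_Icc hab

theorem intervalIntegral.integral_comp_add_div_unit (f : ℝ → ℝ) (c : ℝ) {m : ℝ} (hm : m ≠ 0) :
    ∫ t in (0 : ℝ)..1, f ((c + t) / m) = m * ∫ y in c / m..(c + 1) / m, f y := by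
  simp_rw [add_div c _ m]
  rw [intervalIntegral.integral_comp_add_div (f := f) hm, smul_eq_mul, zero_div, add_zero]

theorem BK1_derivWithin_eq {F : ℝ → ℝ} (hF : ContDiffOn ℝ 1 F (Set.Icc 0 1)) {m : ℕ}
    (hm : 0 < m) (x : ℝ) : BK1 m (derivWithin F (Set.Icc 0 1)) x =
      m * ∑ l ∈ range m, bern (m - 1) l x * (F ((l + 1) / m) - F (l / m)) := by
  have hm' : (0 : ℝ) < m := Nat.cast_pos.mpr hm
  rw [BK1, Nat.sub_add_cancel hm, Finset.mul_sum]
  refine Finset.sum_congr rfl fun l hl => ?_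
  have hl1 : (l : ℝ) + 1 ≤ m := by exact_mod_cast Finset.mem_range.mp hl
  rw [intervalIntegral.integral_comp_add_div_unit _ _ hm'.ne',
    integral_derivWithin_Icc_of_le hF (by gcongr; linarith) (by positivity)
      ((div_le_one hm').mpr hl1)]
  ring

theorem lAlpha_sq {α : ℝ} (h0 : 0 < α) (h2 : α ≤ 2) :
    lAlpha α ^ 2 = 3 * Real.log (2 / α) + 1 := by
  have hlog : Real.log (2 * Real.exp (1 / 3) / α) = Real.log (2 / α) + 1 / 3 := by
    rw [mul_div_right_comm, Real.log_mul (by positivity) (Real.exp_pos _).ne', Real.log_exp]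
  have hlog0 : 0 ≤ Real.log (2 / α) := Real.log_nonneg ((one_le_div h0).mpr h2)
  rw [lAlpha, Real.sq_sqrt (by rw [hlog]; positivity), hlog]
  ring

theorem one_le_lAlpha {α : ℝ} (h0 : 0 < α) (h2 : α ≤ 2) : 1 ≤ lAlpha α := by
  have hsq := lAlpha_sq h0 h2
  have hlog0 : 0 ≤ Real.log (2 / α) := Real.log_nonneg ((one_le_div h0).mpr h2)
  have hl0 : 0 ≤ lAlpha α := Real.sqrt_nonneg _
  nlinarith

theorem two_mul_exp_neg_lAlpha_sq_add_one_div_three_le {α : ℝ} (h0 : 0 < α) (h2 : α ≤ 2) :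
    2 * Real.exp (-(lAlpha α ^ 2 + 1) / 3) ≤ α := by
  have hexp : Real.exp (-Real.log (2 / α)) = α / 2 := by
    rw [Real.exp_neg, Real.exp_log (by positivity), inv_div]
  have : Real.exp (-(lAlpha α ^ 2 + 1) / 3) ≤ Real.exp (-Real.log (2 / α)) := by
    rw [Real.exp_le_exp, lAlpha_sq h0 h2]
    linarith
  linarith

theorem chernoff_exponent_le {l s ν : ℝ} (hl : 0 < l) (hs : 0 < s)
    (hν : ν ≤ s ^ 2 * (1 + 1 / l ^ 2)) :
    -(2 * l / (3 * s)) * ((l + 1 / l) * s) + 3 / 4 * (2 * l / (3 * s)) ^ 2 * ν ≤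
      -(l ^ 2 + 1) / 3 := by
  have hlin : (2 * l / (3 * s)) * ((l + 1 / l) * s) = 2 * (l ^ 2 + 1) / 3 := by
    field_simp
  have hquad : (2 * l / (3 * s)) ^ 2 * (s ^ 2 * (1 + 1 / l ^ 2)) = 4 * (l ^ 2 + 1) / 9 := by
    field_simp
    ring
  have := mul_le_mul_of_nonneg_left hν (sq_nonneg (2 * l / (3 * s)))
  rw [neg_mul, hlin]
  linarith

theorem le_abs_sub_of_add_le_abs_sub {a b c r ε : ℝ} (h : r + ε ≤ |a - c|) (hb : |b - c| ≤ ε) :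
    r ≤ |a - b| := by
  have := abs_sub_abs_le_abs_sub (a - c) (b - c)
  rw [sub_sub_sub_cancel_right] at this
  linarith

theorem measureReal_le_abs_deriv_BY_sub_BK1_le {Ω : Type*} [MeasurableSpace Ω] {P : Measure Ω}
    [IsProbabilityMeasure P] {n : ℕ} (hn : 0 < n) {X : Fin n → Ω → ℝ}
    (hmeas : ∀ r, Measurable (X r)) (hindep : iIndepFun X P) {F : ℝ → ℝ}
    (hcdf : ∀ r y, P.real {ω | X r ω ≤ y} = F y) (hF : ContDiffOn ℝ 1 F (Set.Icc 0 1))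
    {m : ℕ} (hm : 0 < m) {x : ℝ} (hx : x ∈ Set.Icc 0 1) {t u : ℝ} (ht0 : 0 ≤ t) (ht1 : t ≤ 1) :
    P.real {ω | m / n * u ≤
        |deriv (fun y => BY m n X ω y) x - BK1 m (derivWithin F (Set.Icc 0 1)) x|} ≤
      2 * Real.exp (-t * u + 3 / 4 * t ^ 2 * (n / m * BK1 m (derivWithin F (Set.Icc 0 1)) x)) := by
  set Z : Fin n → Ω → ℝ := fun r ω => bernDerivKernel m x (X r ω)
  have hZmeas : ∀ r, Measurable (Z r) := fun r => (measurable_bernDerivKernel m x).comp (hmeas r)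
  have hmean : ∑ r, P[Z r] = n / m * BK1 m (derivWithin F (Set.Icc 0 1)) x := by
    simp only [Z, integral_bernDerivKernel_comp (hmeas _) (hcdf _), BK1_derivWithin_eq hF hm,
      Finset.sum_const, Finset.card_univ, Fintype.card_fin, nsmul_eq_mul]
    field_simp
  have hmn : (0 : ℝ) < m / n := by positivity
  have hevent : ∀ ω, (m / n * u ≤
      |deriv (fun y => BY m n X ω y) x - BK1 m (derivWithin F (Set.Icc 0 1)) x|) ↔
      u ≤ |∑ r, Z r ω - ∑ r, P[Z r]| := by
    intro ω
    have hfactor : m / n * ∑ r, Z r ω - BK1 m (derivWithin F (Set.Icc 0 1)) x =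
        m / n * (∑ r, Z r ω - n / m * BK1 m (derivWithin F (Set.Icc 0 1)) x) := by
      field_simp
    rw [deriv_BY, hmean, hfactor, abs_mul, abs_of_pos hmn, mul_le_mul_iff_of_pos_left hmn]
  rw [← hmean]
  simp_rw [hevent]
  exact measureReal_le_abs_sum_sub_le (hindep.comp _ fun _ => measurable_bernDerivKernel m x)
    hZmeas (fun r ω => bernDerivKernel_mem_Icc m hx _) ht0 ht1

theorem confidence_interval_for_density_general
    {Ω : Type*} [MeasurableSpace Ω] (P : Measure Ω) [IsProbabilityMeasure P]
    (n : ℕ) (hn : 2 ≤ n) (X : Fin n → Ω → ℝ)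
    (hmeas : ∀ r, Measurable (X r))
    (hindep : iIndepFun X P)
    (F : ℝ → ℝ)
    (hcdf : ∀ r y, (P {ω | X r ω ≤ y}).toReal = F y)
    (m : ℕ) (hm : 1 < m)
    (α : ℝ) (hα : α ∈ Set.Ioo (0:ℝ) 1)
    (hF : ContDiffOn ℝ 1 F (Set.Icc 0 1))
    (ρ : ℝ → ℝ) (hρ : ρ = derivWithin F (Set.Icc 0 1))
    (hρpos : ∀ y ∈ Set.Ioo (0:ℝ) 1, 0 < ρ y)
    (x : ℝ) (hx : x ∈ Set.Ioo (0:ℝ) 1)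
    (hmn : (m : ℝ) / n ≤ ρ x / (lAlpha α) ^ 2)
    (hbias : |BK1 m ρ x - ρ x| ≤
      min (ρ x / (lAlpha α) ^ 2) (lAlpha α * Real.sqrt ((m : ℝ) * ρ x / n))) :
    P {ω | |deriv (fun y => BY m n X ω y) x - ρ x| ≥
        (2 * lAlpha α + 1 / lAlpha α) * Real.sqrt ((m : ℝ) * ρ x / n)} ≤
      ENNReal.ofReal α := by
  have hn0 : (0 : ℝ) < n := by exact_mod_cast (by omega : 0 < n)
  have hm0 : (0 : ℝ) < m := by exact_mod_cast (by omega : 0 < m)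
  have hρx : 0 < ρ x := hρpos x hx
  set l := lAlpha α
  set σ := Real.sqrt (m * ρ x / n)
  set s := n / m * σ
  have hl : 0 < l := zero_lt_one.trans_le (one_le_lAlpha hα.1 (by linarith [hα.2]))
  have hs : 0 < s := by positivity
  have hs2 : s ^ 2 = n / m * ρ x := by
    rw [mul_pow, Real.sq_sqrt (by positivity)]
    field_simp
  have hls : l ≤ s := by
    refine (pow_le_pow_iff_left₀ hl.le hs.le two_ne_zero).mp ?_
    rw [div_le_div_iff₀ hn0 (by positivity)] at hmn
    rw [hs2, div_mul_eq_mul_div, le_div_iff₀ hm0]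
    linarith
  have hν : n / m * BK1 m ρ x ≤ s ^ 2 * (1 + 1 / l ^ 2) := by
    have hup : BK1 m ρ x ≤ ρ x * (1 + 1 / l ^ 2) := by
      rw [mul_add, mul_one, mul_one_div]
      linarith [(abs_le.mp (hbias.trans (min_le_left _ _))).2]
    rw [hs2, mul_assoc]
    gcongr
  have hsub : {ω | |deriv (fun y => BY m n X ω y) x - ρ x| ≥ (2 * l + 1 / l) * σ} ⊆
      {ω | m / n * ((l + 1 / l) * s) ≤ |deriv (fun y => BY m n X ω y) x - BK1 m ρ x|} := by
    intro ω (hω : (2 * l + 1 / l) * σ ≤ _)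
    have hσ : m / n * s = σ := by simp only [s]; field_simp
    rw [Set.mem_ofPred_eq, mul_left_comm, hσ]
    exact le_abs_sub_of_add_le_abs_sub (by linarith) (hbias.trans (min_le_right _ _))
  subst hρ
  have key := measureReal_le_abs_deriv_BY_sub_BK1_le (by omega) hmeas hindep hcdf hF (m := m)
    (by omega) (Set.Ioo_subset_Icc_self hx) (t := 2 * l / (3 * s)) (u := (l + 1 / l) * s)
    (by positivity) ((div_le_one (by positivity)).mpr (by linarith))
  calc _ ≤ _ := measure_mono hsub
    _ = ENNReal.ofReal (P.real _) := (ofReal_measureReal).symm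
    _ ≤ ENNReal.ofReal α := by
      refine ENNReal.ofReal_le_ofReal (key.trans ?_)
      grw [chernoff_exponent_le hl hs hν]
      exact two_mul_exp_neg_lAlpha_sq_add_one_div_three_le hα.1 (by linarith [hα.2])

theorem confidence_interval_for_density
    {Ω : Type*} [MeasurableSpace Ω] (P : Measure Ω) [IsProbabilityMeasure P]
    (n : ℕ) (hn : 2 ≤ n) (X : Fin n → Ω → ℝ)
    (hmeas : ∀ r, Measurable (X r))
    (hindep : iIndepFun X P)
    (hval : ∀ r ω, X r ω ∈ Set.Icc (0:ℝ) 1)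
    (F : ℝ → ℝ) (hFcont : Continuous F)
    (hcdf : ∀ r y, (P {ω | X r ω ≤ y}).toReal = F y)
    (m : ℕ) (hm : 1 < m)
    (α : ℝ) (hα : α ∈ Set.Ioo (0:ℝ) 1)
    (hF : ContDiffOn ℝ 1 F (Set.Icc 0 1))
    (ρ : ℝ → ℝ) (hρ : ρ = derivWithin F (Set.Icc 0 1))
    (hρpos : ∀ y ∈ Set.Ioo (0:ℝ) 1, 0 < ρ y)
    (x : ℝ) (hx : x ∈ Set.Ioo (0:ℝ) 1)
    (hmn : (m : ℝ) / n ≤ ρ x / (lAlpha α) ^ 2)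
    (hbias : |BK1 m ρ x - ρ x| ≤
      min (ρ x / (lAlpha α) ^ 2) (lAlpha α * Real.sqrt ((m : ℝ) * ρ x / n))) :
    P {ω | |deriv (fun y => BY m n X ω y) x - ρ x| ≥
        (2 * lAlpha α + 1 / lAlpha α) * Real.sqrt ((m : ℝ) * ρ x / n)} ≤
      ENNReal.ofReal α :=
  confidence_interval_for_density_general P n hn X hmeas hindep F hcdf m hm α hα hF ρ hρ hρpos x hx
    hmn hbias
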